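/- arXiv:1802.02260 — 2 statements merged into one kernel-verified Lean document; each statement's English description precedes it below -/
import Mathlib

section
/- For any real-valued semimartingale X on a filtered probability space, the process |X_t| - |X_0| dominates the stochastic integral of sgn(X_{s-}) against X: for all t ≥ 0, |X_t| - |X_0| ≥ ∫_0^t sgn(X_{s-}) dX_s almost surely, where sgn(x) = 1 for x > 0, -1 for x < 0, and 0 for x = 0. -/
open MeasureTheory Set Filter

/-- `π n : {0, …, N n} → ℝ` is a sequence of partitions of `[a, b]` with mesh tending to 0. -/
def IsPartitionSeq (a b : ℝ) (N : ℕ → ℕ) (π : ℕ → ℕ → ℝ) : Prop :=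
  (∀ n, π n 0 = a) ∧ (∀ n, π n (N n) = b) ∧ (∀ n i, π n i ≤ π n (i + 1)) ∧
  (∀ ε > (0:ℝ), ∃ n₀, ∀ n ≥ n₀, ∀ i < N n, π n (i + 1) - π n i ≤ ε)

/-- `I` is the Itô (stochastic) integral `∫_0^· H dX`: for every `t ≥ 0`, the Riemann sums of
`H` at the left endpoints of any sequence of partitions of `[0, t]` with vanishing mesh
converge in measure (in probability) to `I t`. -/
def IsItoIntegral {Ω : Type*} [MeasurableSpace Ω] (μ : Measure Ω)
    (H X I : ℝ → Ω → ℝ) : Prop :=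
  ∀ t : ℝ, 0 ≤ t → ∀ (N : ℕ → ℕ) (π : ℕ → ℕ → ℝ), IsPartitionSeq 0 t N π →
    TendstoInMeasure μ
      (fun n ω => ∑ i ∈ Finset.range (N n), H (π n i) ω * (X (π n (i + 1)) ω - X (π n i) ω))
      atTop (fun ω => I t ω)

/-- `sgn x = 1_{x>0} - 1_{x<0}`. -/
noncomputable def sgn (x : ℝ) : ℝ := if 0 < x then 1 else if x < 0 then -1 else 0

/-!
Shift the uniform grid of mesh `h = t / (n + 1)` on `[0, t]` by `δ ∈ (0, h]`, keeping the first
point `0`: `0, δ, h + δ, 2h + δ, …`, capped at `t`. As `δ → 0+`, right-continuity makes both `X`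
and its left limits at the shifted points converge to the values of `X` on the unshifted grid, so
by the elementary inequality `sgn a * (y - x) ≤ |y| - |x| + 2 min |x - a| |y - x|` the Riemann sum
of `sgn (X_{s-})` telescopes to at most `|X_t| - |X_0| + o(1)` (at the point `0`, which is not
shifted, the increment is small rather than the jump). The sums converge in probability to the
Itô integral along every choice of shifts, so for large `n` they are close to it uniformly in the
shift (a diagonal argument), and the pathwise bound passes to the integral almost surely.
-/

open Function Topology
open scoped ENNReal

theorem tendsto_leftLim_nhdsGT_of_continuousWithinAt {α β : Type*} [LinearOrder α]
    [TopologicalSpace α] [OrderTopology α] [NoMaxOrder α] [TopologicalSpace β] [RegularSpace β]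
    {f : α → β} {c : α} (hf : ContinuousWithinAt f (Ici c) c) :
    Tendsto (leftLim f) (𝓝[>] c) (𝓝 (f c)) := by
  refine (closed_nhds_basis (f c)).tendsto_right_iff.2 fun s ⟨hs, hs_closed⟩ => ?_
  obtain ⟨u, hcu, hu⟩ := mem_nhdsGE_iff_exists_Ico_subset.1 (hf hs)
  filter_upwards [Ioo_mem_nhdsGT hcu] with p hp
  refine hs_closed.mem_of_mapClusterPt (mapClusterPt_leftLim f p) ?_
  filter_upwards [Ioc_mem_nhdsLE hp.1] with x hx using hu ⟨hx.1.le, hx.2.trans_lt hp.2⟩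

theorem tendsto_sub_leftLim_nhdsGT_of_continuousWithinAt {α E : Type*} [LinearOrder α]
    [TopologicalSpace α] [OrderTopology α] [NoMaxOrder α] [NormedAddCommGroup E]
    {f : α → E} {c : α} (hf : ContinuousWithinAt f (Ici c) c) :
    Tendsto (fun p => f p - leftLim f p) (𝓝[>] c) (𝓝 0) := by
  simpa using ((hf.mono Ioi_subset_Ici_self).tendsto).sub
    (tendsto_leftLim_nhdsGT_of_continuousWithinAt hf)

theorem tendsto_const_add_nhdsGT (c : ℝ) : Tendsto (c + ·) (𝓝[>] 0) (𝓝[>] c) :=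
  tendsto_nhdsWithin_of_tendsto_nhds_of_eventually_within _
    (((continuous_const_add c).tendsto' 0 c (add_zero c)).mono_left nhdsWithin_le_nhds)
    (eventually_nhdsWithin_of_forall fun δ hδ => by simpa using hδ)

theorem sgn_mul_sub_le (a x y : ℝ) : sgn a * (y - x) ≤ |y| - |x| + 2 * min |x - a| |y - x| := by
  suffices sgn a * (y - x) - (|y| - |x|) ≤ min (2 * |x - a|) (2 * |y - x|) by
    rw [mul_min_of_nonneg _ _ zero_le_two]; linarith
  unfold sgn
  refine le_min ?_ ?_ <;> split_ifs <;>
    cases abs_cases x <;> cases abs_cases y <;> cases abs_cases (x - a) <;>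
    cases abs_cases (y - x) <;> linarith

theorem sum_sgn_mul_sub_le (a x : ℕ → ℝ) (N : ℕ) :
    ∑ i ∈ Finset.range N, sgn (a i) * (x (i + 1) - x i) ≤
      |x N| - |x 0| + 2 * ∑ i ∈ Finset.range N, min |x i - a i| |x (i + 1) - x i| :=
  calc ∑ i ∈ Finset.range N, sgn (a i) * (x (i + 1) - x i)
      ≤ ∑ i ∈ Finset.range N, (|x (i + 1)| - |x i| + 2 * min |x i - a i| |x (i + 1) - x i|) :=
        Finset.sum_le_sum fun i _ => sgn_mul_sub_le _ _ _
    _ = _ := by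
        rw [Finset.sum_add_distrib, Finset.sum_range_sub (fun i => |x i|), Finset.mul_sum]

noncomputable def shiftedGrid (t : ℝ) (n : ℕ) (δ : ℝ) : ℕ → ℝ
  | 0 => 0
  | i + 1 => min t (i * (t / (n + 1)) + δ)

section shiftedGrid

variable {t δ : ℝ} {n : ℕ}

@[simp] theorem shiftedGrid_zero : shiftedGrid t n δ 0 = 0 := rfl

theorem shiftedGrid_succ (i : ℕ) :
    shiftedGrid t n δ (i + 1) = min t (i * (t / (n + 1)) + δ) := rfl

theorem shiftedGrid_succ_of_le (ht : 0 ≤ t) {k : ℕ} (hk : k ≤ n) (hδ : δ ≤ t / (n + 1)) :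
    shiftedGrid t n δ (k + 1) = k * (t / (n + 1)) + δ := by
  refine min_eq_right ?_
  have hkn : (k : ℝ) * (t / (n + 1)) ≤ n * (t / (n + 1)) := by gcongr
  have hmul : ((n : ℝ) + 1) * (t / (n + 1)) = t := mul_div_cancel₀ t (by positivity)
  linarith

theorem shiftedGrid_last (hδ : 0 ≤ δ) : shiftedGrid t n δ (n + 2) = t := by
  refine min_eq_left ?_
  have hmul : ((n : ℝ) + 1) * (t / (n + 1)) = t := mul_div_cancel₀ t (by positivity)
  push_cast
  linarith

theorem shiftedGrid_le_succ (ht : 0 ≤ t) (hδ : 0 ≤ δ) (i : ℕ) :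
    shiftedGrid t n δ i ≤ shiftedGrid t n δ (i + 1) := by
  rcases i with _ | i
  · simpa [shiftedGrid_succ] using le_min ht hδ
  · refine min_le_min le_rfl ?_
    push_cast
    nlinarith [div_nonneg ht (by positivity : (0 : ℝ) ≤ n + 1)]

theorem shiftedGrid_succ_sub_le (ht : 0 ≤ t) (hδ : δ ≤ t / (n + 1)) (i : ℕ) :
    shiftedGrid t n δ (i + 1) - shiftedGrid t n δ i ≤ t / (n + 1) := by
  have hh : 0 ≤ t / (n + 1) := by positivity
  rcases i with _ | i
  · simpa [shiftedGrid_succ] using (min_le_right _ _).trans hδ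
  · have h : min t ((i + 1 : ℕ) * (t / (n + 1)) + δ) ≤
        min t (i * (t / (n + 1)) + δ) + t / (n + 1) :=
      calc min t ((i + 1 : ℕ) * (t / (n + 1)) + δ)
          ≤ min (t + t / (n + 1)) (i * (t / (n + 1)) + δ + t / (n + 1)) :=
            min_le_min (by linarith) (by push_cast; linarith)
        _ = min t (i * (t / (n + 1)) + δ) + t / (n + 1) := min_add_add_right _ _ _
    rw [shiftedGrid_succ, shiftedGrid_succ]
    linarith

end shiftedGrid

theorem isPartitionSeq_shiftedGrid {t : ℝ} (ht : 0 ≤ t) {δ : ℕ → ℝ}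
    (hδ : ∀ n : ℕ, δ n ∈ Icc 0 (t / (n + 1))) :
    IsPartitionSeq 0 t (fun n => n + 2) (fun n => shiftedGrid t n (δ n)) := by
  refine ⟨fun n => rfl, fun n => shiftedGrid_last (hδ n).1,
    fun n => shiftedGrid_le_succ ht (hδ n).1, fun ε hε => ?_⟩
  have hmesh : Tendsto (fun n : ℕ => t / (n + 1)) atTop (𝓝 0) := by
    simpa only [mul_one_div, mul_zero] using tendsto_one_div_add_atTop_nhds_zero_nat.const_mul t
  obtain ⟨n₀, hn₀⟩ := eventually_atTop.1 (hmesh.eventually (ge_mem_nhds hε))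
  exact ⟨n₀, fun n hn i _ => (shiftedGrid_succ_sub_le ht (hδ n).2 i).trans (hn₀ n hn)⟩

theorem tendsto_sum_min_abs_sub_leftLim_shiftedGrid {f : ℝ → ℝ}
    (hf : ∀ s, ContinuousWithinAt f (Ici s) s) {t : ℝ} (ht : 0 < t) (n : ℕ) :
    Tendsto (fun δ => ∑ i ∈ Finset.range (n + 2),
        min |f (shiftedGrid t n δ i) - leftLim f (shiftedGrid t n δ i)|
          |f (shiftedGrid t n δ (i + 1)) - f (shiftedGrid t n δ i)|)
      (𝓝[>] 0) (𝓝 0) := by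
  have hgrid : ∀ k ≤ n, ∀ᶠ δ in 𝓝[>] (0 : ℝ),
      shiftedGrid t n δ (k + 1) = k * (t / (n + 1)) + δ := fun k hk =>
    (eventually_nhdsWithin_of_eventually_nhds (eventually_lt_nhds (by positivity))).mono
      fun δ hδ => shiftedGrid_succ_of_le ht.le hk hδ.le
  have hterm : ∀ i ∈ Finset.range (n + 2), Tendsto (fun δ =>
      min |f (shiftedGrid t n δ i) - leftLim f (shiftedGrid t n δ i)|
        |f (shiftedGrid t n δ (i + 1)) - f (shiftedGrid t n δ i)|) (𝓝[>] 0) (𝓝 0) := by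
    rintro (_ | k) hk
    · have h0 : Tendsto (fun δ => |f δ - f 0|) (𝓝[>] 0) (𝓝 0) := by
        simpa using (((hf 0).mono Ioi_subset_Ici_self).tendsto.sub_const (f 0)).abs
      refine squeeze_zero' (.of_forall fun _ => le_min (abs_nonneg _) (abs_nonneg _))
        ((hgrid 0 n.zero_le).mono fun δ hδ => ?_) h0
      rw [hδ, shiftedGrid_zero]
      simp
    · have hc : Tendsto (fun δ => |f (k * (t / (n + 1)) + δ) - leftLim f (k * (t / (n + 1)) + δ)|)
          (𝓝[>] 0) (𝓝 0) := by
        simpa using ((tendsto_sub_leftLim_nhdsGT_of_continuousWithinAt (hf _)).comp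
          (tendsto_const_add_nhdsGT (k * (t / (n + 1))))).abs
      refine squeeze_zero' (.of_forall fun _ => le_min (abs_nonneg _) (abs_nonneg _))
        ((hgrid k (by simp at hk; omega)).mono fun δ hδ => ?_) hc
      rw [hδ]
      exact min_le_left _ _
  simpa using tendsto_finsetSum _ hterm

theorem eventually_sum_sgn_leftLim_mul_sub_le {f : ℝ → ℝ}
    (hf : ∀ s, ContinuousWithinAt f (Ici s) s) {t : ℝ} (ht : 0 < t) (n : ℕ) {ε : ℝ} (hε : 0 < ε) :
    ∀ᶠ δ in 𝓝[>] 0, ∑ i ∈ Finset.range (n + 2), sgn (leftLim f (shiftedGrid t n δ i)) *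
        (f (shiftedGrid t n δ (i + 1)) - f (shiftedGrid t n δ i)) ≤ |f t| - |f 0| + ε := by
  filter_upwards [(tendsto_sum_min_abs_sub_leftLim_shiftedGrid hf ht n).eventually
      (ge_mem_nhds (half_pos hε)),
    self_mem_nhdsWithin] with δ hsmall hδ
  have h := sum_sgn_mul_sub_le (fun i => leftLim f (shiftedGrid t n δ i))
    (fun i => f (shiftedGrid t n δ i)) (n + 2)
  simp only [shiftedGrid_last (le_of_lt hδ), shiftedGrid_zero] at h
  linarith

section Diagonal

variable {Ω : Type*} [MeasurableSpace Ω] {μ : Measure Ω}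

theorem exists_forall_measure_le_of_forall_tendstoInMeasure_comp {E : Type*} [EDist E]
    {S : ℕ → ℕ → Ω → E} {Y : Ω → E}
    (hS : ∀ φ : ℕ → ℕ, TendstoInMeasure μ (fun n => S n (φ n)) atTop Y)
    {δ ε : ℝ≥0∞} (hδ : 0 < δ) (hε : 0 < ε) :
    ∃ n, ∀ j, μ {ω | δ ≤ edist (S n j ω) (Y ω)} ≤ ε := by
  by_contra! h
  choose φ hφ using h
  obtain ⟨n, hn⟩ := ((hS φ δ hδ).eventually (gt_mem_nhds hε)).exists
  exact (hφ n).not_gt hn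

theorem measure_setOf_add_le_eq_zero_of_forall_tendstoInMeasure_comp
    {S : ℕ → ℕ → Ω → ℝ} {Y g : Ω → ℝ}
    (hS : ∀ φ : ℕ → ℕ, TendstoInMeasure μ (fun n => S n (φ n)) atTop Y)
    (hle : ∀ n ω, ∀ ε > 0, ∀ᶠ j in atTop, S n j ω ≤ g ω + ε) {κ : ℝ} (hκ : 0 < κ) :
    μ {ω | g ω + κ ≤ Y ω} = 0 := by
  refine le_antisymm (ENNReal.le_of_forall_pos_le_add fun ε hε _ => ?_) zero_le
  obtain ⟨n, hn⟩ := exists_forall_measure_le_of_forall_tendstoInMeasure_comp hS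
    (ENNReal.ofReal_pos.2 (half_pos hκ)) (ENNReal.coe_pos.2 hε)
  set C : ℕ → Set Ω := fun j => {ω | ENNReal.ofReal (κ / 2) ≤ edist (S n j ω) (Y ω)}
  have hsub : {ω | g ω + κ ≤ Y ω} ⊆ ⋃ J, ⋂ j ≥ J, C j := by
    intro ω hω
    obtain ⟨J, hJ⟩ := eventually_atTop.1 (hle n ω _ (half_pos hκ))
    refine mem_iUnion.2 ⟨J, mem_iInter₂.2 fun j hj => ?_⟩
    show _ ≤ edist (S n j ω) (Y ω)
    rw [edist_dist, Real.dist_eq]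
    exact ENNReal.ofReal_le_ofReal (le_abs.2 (Or.inr (by linarith [hJ j hj, hω.out])))
  calc μ {ω | g ω + κ ≤ Y ω} ≤ μ (⋃ J, ⋂ j ≥ J, C j) := measure_mono hsub
    _ = ⨆ J, μ (⋂ j ≥ J, C j) :=
        Monotone.measure_iUnion fun _ _ hJ =>
          biInter_mono (fun _ hj => hJ.trans hj) fun _ _ => le_rfl
    _ ≤ ε := iSup_le fun J => (measure_mono (biInter_subset_of_mem le_rfl)).trans (hn J)
    _ = 0 + ε := (zero_add _).symm

theorem ae_le_of_forall_tendstoInMeasure_comp {S : ℕ → ℕ → Ω → ℝ} {Y g : Ω → ℝ}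
    (hS : ∀ φ : ℕ → ℕ, TendstoInMeasure μ (fun n => S n (φ n)) atTop Y)
    (hle : ∀ n ω, ∀ ε > 0, ∀ᶠ j in atTop, S n j ω ≤ g ω + ε) :
    ∀ᵐ ω ∂μ, Y ω ≤ g ω := by
  rw [ae_iff]
  refine measure_mono_null (fun ω hω => ?_) (measure_iUnion_null fun k : ℕ =>
    measure_setOf_add_le_eq_zero_of_forall_tendstoInMeasure_comp hS hle
      (Nat.one_div_pos_of_nat (n := k)))
  obtain ⟨k, hk⟩ := exists_nat_one_div_lt (sub_pos.2 (not_le.1 hω))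
  exact mem_iUnion.2 ⟨k, show g ω + 1 / (k + 1) ≤ Y ω by linarith⟩

end Diagonal

theorem stmt0_general {Ω : Type*} [MeasurableSpace Ω] (μ : Measure Ω)
    (X I : ℝ → Ω → ℝ)
    (hcadlag : ∀ ω, ∀ t : ℝ,
      ContinuousWithinAt (fun s => X s ω) (Set.Ici t) t ∧
      ∃ l : ℝ, Tendsto (fun s => X s ω) (nhdsWithin t (Set.Iio t)) (nhds l))
    (hI : IsItoIntegral μ (fun s ω => sgn (Function.leftLim (fun u => X u ω) s)) X I) :
    ∀ t : ℝ, 0 ≤ t → ∀ᵐ ω ∂μ, I t ω ≤ |X t ω| - |X 0 ω| := by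
  intro t ht
  rcases ht.eq_or_lt with rfl | ht
  · have hπ : IsPartitionSeq 0 0 (fun _ => 0) (fun _ _ => 0) :=
      ⟨fun _ => rfl, fun _ => rfl, fun _ _ => le_rfl,
        fun _ _ => ⟨0, fun _ _ i hi => absurd hi (Nat.not_lt_zero i)⟩⟩
    exact ae_le_of_forall_tendstoInMeasure_comp (S := fun _ _ _ => 0)
      (fun _ => by simpa using hI 0 le_rfl _ _ hπ)
      fun _ _ _ hε => .of_forall fun _ => by simpa using hε.le
  · have hδ (n : ℕ) : ∃ δ : ℕ → ℝ, (∀ j, δ j ∈ Ioo 0 (t / (n + 1))) ∧ Tendsto δ atTop (𝓝 0) :=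
      let ⟨δ, _, hδ, hδ0⟩ := exists_seq_strictAnti_tendsto' (by positivity : (0 : ℝ) < t / (n + 1))
      ⟨δ, hδ, hδ0⟩
    choose δ hδ hδ0 using hδ
    exact ae_le_of_forall_tendstoInMeasure_comp (Y := I t) (g := fun ω => |X t ω| - |X 0 ω|)
      (S := fun n j ω => ∑ i ∈ Finset.range (n + 2),
        sgn (leftLim (X · ω) (shiftedGrid t n (δ n j) i)) *
          (X (shiftedGrid t n (δ n j) (i + 1)) ω - X (shiftedGrid t n (δ n j) i) ω))
      (fun φ => hI t ht.le _ _
        (isPartitionSeq_shiftedGrid ht.le fun n => Ioo_subset_Icc_self (hδ n (φ n))))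
      fun n ω ε hε => (tendsto_nhdsWithin_iff.2 ⟨hδ0 n, .of_forall fun j => (hδ n j).1⟩).eventually
        (eventually_sum_sgn_leftLim_mul_sub_le (fun s => (hcadlag ω s).1) ht n hε)

/-- Tanaka-type inequality: for a càdlàg semimartingale `X`,
`|X_t| - |X_0| ≥ ∫_0^t sgn(X_{s-}) dX_s` a.s., for every `t ≥ 0`. -/
theorem stmt0 {Ω : Type*} [MeasurableSpace Ω] (μ : Measure Ω) [IsProbabilityMeasure μ]
    (X I : ℝ → Ω → ℝ)
    (hcadlag : ∀ ω, ∀ t : ℝ,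
      ContinuousWithinAt (fun s => X s ω) (Set.Ici t) t ∧
      ∃ l : ℝ, Tendsto (fun s => X s ω) (nhdsWithin t (Set.Iio t)) (nhds l))
    (hI : IsItoIntegral μ (fun s ω => sgn (Function.leftLim (fun u => X u ω) s)) X I) :
    ∀ t : ℝ, 0 ≤ t → ∀ᵐ ω ∂μ, I t ω ≤ |X t ω| - |X 0 ω| :=
  stmt0_general μ X I hcadlag hI
end

section
/- The map (ω, t, ω') ↦ ω ⊗_t ω' from Ω × [0,∞) × Ω to Ω is jointly continuous, where Ω is the space of continuous paths starting at 0 with the metric of locally uniform convergence, and (ω ⊗_t ω')_s := ω_s for s < t and ω_t + ω'_{s-t} for s ≥ t. Consequently, if ξ is Borel-measurable on Ω, then the map (ω, t, ω') ↦ ξ(ω ⊗_t ω') is jointly Borel-measurable. -/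
open Set

/-- The canonical path space: continuous paths in `ℝ^n` starting at the origin, with the
topology of locally uniform convergence (compact-open topology). -/
def Path0 (n : ℕ) : Type := {ω : C(ℝ, EuclideanSpace ℝ (Fin n)) // ω 0 = 0}

noncomputable instance (n : ℕ) : TopologicalSpace (Path0 n) :=
  inferInstanceAs (TopologicalSpace {ω : C(ℝ, EuclideanSpace ℝ (Fin n)) // ω 0 = 0})

/-- The concatenation `(ω ⊗_t ω')_s = ω_s` for `s ≤ t` and `= ω_t + ω'_{s-t}` for `s ≥ t`,
as a continuous path. -/
noncomputable def concatMap {n : ℕ} (t : ℝ) (ω ω' : Path0 n) :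
    C(ℝ, EuclideanSpace ℝ (Fin n)) :=
  ⟨fun s => if s ≤ t then ω.1 s else ω.1 t + ω'.1 (s - t), by
    apply Continuous.if_le ω.1.continuous
      (continuous_const.add (ω'.1.continuous.comp (continuous_id.sub continuous_const)))
      continuous_id continuous_const
    intro s hs
    simp only [id_eq] at hs
    subst hs
    simp [ω'.2]⟩

/-- Concatenation at a time `t ∈ [0, ∞)` again yields a path starting at the origin. -/
noncomputable def concatP {n : ℕ} (ω : Path0 n) (t : NNReal) (ω' : Path0 n) : Path0 n :=
  ⟨concatMap (t : ℝ) ω ω', by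
    have h0 : (0:ℝ) ≤ (t:ℝ) := t.2
    show (if (0:ℝ) ≤ (t:ℝ) then ω.1 0 else ω.1 (t:ℝ) + ω'.1 (0 - (t:ℝ))) = 0
    simp [h0, ω.2]⟩

/-- the concatenation map `(ω, t, ω') ↦ ω ⊗_t ω'` is jointly continuous on
`Ω × [0,∞) × Ω`; consequently, for any Borel-measurable `ξ : Ω → ℝ`, the map
`(ω, t, ω') ↦ ξ(ω ⊗_t ω')` is jointly Borel-measurable. -/
theorem stmt6 (n : ℕ) :
    Continuous (fun p : Path0 n × NNReal × Path0 n => concatP p.1 p.2.1 p.2.2) ∧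
    ∀ ξ : Path0 n → ℝ, @Measurable (Path0 n) ℝ (borel _) (borel _) ξ →
      @Measurable (Path0 n × NNReal × Path0 n) ℝ (borel _) (borel _)
        (fun p => ξ (concatP p.1 p.2.1 p.2.2)) := by
  have hcont : Continuous (fun p : Path0 n × NNReal × Path0 n => concatP p.1 p.2.1 p.2.2) := by
    apply continuous_induced_rng.2
    apply ContinuousMap.continuous_of_continuous_uncurry
    have hev : Continuous fun q : C(ℝ, EuclideanSpace ℝ (Fin n)) × ℝ => q.1 q.2 :=
      ContinuousEval.continuous_eval
    have hω : Continuous fun q : (Path0 n × NNReal × Path0 n) × ℝ =>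
        (q.1.1.1 : C(ℝ, EuclideanSpace ℝ (Fin n))) :=
      continuous_subtype_val.comp (continuous_fst.comp continuous_fst)
    have hω' : Continuous fun q : (Path0 n × NNReal × Path0 n) × ℝ =>
        (q.1.2.2.1 : C(ℝ, EuclideanSpace ℝ (Fin n))) :=
      continuous_subtype_val.comp (continuous_snd.comp (continuous_snd.comp continuous_fst))
    have ht : Continuous fun q : (Path0 n × NNReal × Path0 n) × ℝ => (q.1.2.1 : ℝ) :=
      NNReal.continuous_coe.comp (continuous_fst.comp (continuous_snd.comp continuous_fst))
    have hs : Continuous fun q : (Path0 n × NNReal × Path0 n) × ℝ => q.2 := continuous_snd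
    show Continuous fun q : (Path0 n × NNReal × Path0 n) × ℝ =>
      if q.2 ≤ (q.1.2.1 : ℝ) then q.1.1.1 q.2
      else q.1.1.1 (q.1.2.1 : ℝ) + q.1.2.2.1 (q.2 - (q.1.2.1 : ℝ))
    apply Continuous.if_le
    · exact hev.comp (hω.prodMk hs)
    · exact (hev.comp (hω.prodMk ht)).add (hev.comp (hω'.prodMk (hs.sub ht)))
    · exact hs
    · exact ht
    · intro q hq
      rw [hq]
      simp [q.1.2.2.2]
  refine ⟨hcont, fun ξ hξ => ?_⟩
  letI m1 : MeasurableSpace (Path0 n × NNReal × Path0 n) := borel _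
  letI m2 : MeasurableSpace (Path0 n) := borel _
  haveI : BorelSpace (Path0 n × NNReal × Path0 n) := ⟨rfl⟩
  haveI : BorelSpace (Path0 n) := ⟨rfl⟩
  exact hξ.comp hcont.measurable
end
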